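/- Let M > 0, r : ℝ → ℝ differentiable with r > 2M and r' = Ω² where Ω² = 1 - 2M/r. Let f : ℝ → ℝ be twice differentiable. Then the pure gauge quantities ω⁽¹⁾ := (1/2)·d/dv(Ω⁻²·d/dv(fΩ²)) and Ωtrχ⁽¹⁾ := 2·d/dv(fΩ²/r) satisfy the linearised Raychaudhuri-type relation d/dv(Ωtrχ⁽¹⁾) = -(2Ω²/r)·Ωtrχ⁽¹⁾ + (2M/r²)·Ωtrχ⁽¹⁾ + (4Ω²/r)·ω⁽¹⁾, provided all quantities are evaluated along v with the angular dependence suppressed (f depending only on v). -/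

import Mathlib

/-!
Put `h = fΩ²/r`, so `(Ωtrχ)⁽¹⁾ = 2h'` and, since `∂_v r = Ω²`, `Ω⁻²∂_v(fΩ²) = Ω⁻²∂_v(rh) = h + (r/Ω²)h'`.
On any background with `∂_v r = Ω²` and `∂_v Ω² = 2ωΩ²` (here `ω = M/r²`) one has
`∂_v(r/Ω²) = 1 - 2ωr/Ω²`, and substituting, every `h'` term on the right-hand side cancels,
leaving `2h''` on both sides.
-/

lemma one_sub_two_mul_div_pos {M x : ℝ} (hM : 0 < M) (hx : 2 * M < x) : 0 < 1 - 2 * M / x := by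
  rw [sub_pos, div_lt_one (by linarith)]
  exact hx

lemma hasDerivAt_one_sub_two_mul_div {M : ℝ} {r : ℝ → ℝ} {v : ℝ}
    (hr : HasDerivAt r (1 - 2 * M / r v) v) (hv : r v ≠ 0) :
    HasDerivAt (fun s => 1 - 2 * M / r s) (2 * (M / r v ^ 2) * (1 - 2 * M / r v)) v := by
  refine (((hasDerivAt_const v (2 * M)).div hr hv).const_sub 1).congr_deriv ?_
  field_simp
  ring

lemma contDiff_of_deriv_eq_one_sub_two_mul_div {M : ℝ} {r : ℝ → ℝ} (hr : Differentiable ℝ r)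
    (hr0 : ∀ v, r v ≠ 0) (hr' : ∀ v, deriv r v = 1 - 2 * M / r v) (n : ℕ) :
    ContDiff ℝ n r := by
  induction n with
  | zero => exact contDiff_zero.mpr hr.continuous
  | succ n ih =>
    rw [Nat.cast_succ, contDiff_succ_iff_deriv]
    refine ⟨hr, fun h => by simp at h, ?_⟩
    rw [funext hr']
    exact contDiff_const.sub (contDiff_const.div ih hr0)

theorem raychaudhuri_of_pure_gauge {r Ωsq h : ℝ → ℝ} {ω v : ℝ}
    (hr : ∀ w, HasDerivAt r (Ωsq w) w) (hΩ : HasDerivAt Ωsq (2 * ω * Ωsq v) v)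
    (hh : Differentiable ℝ h) (hh' : DifferentiableAt ℝ (deriv h) v)
    (hr0 : r v ≠ 0) (hΩ0 : Ωsq v ≠ 0) :
    deriv (fun w => 2 * deriv h w) v
      = -(2 * Ωsq v / r v) * (2 * deriv h v) + 2 * ω * (2 * deriv h v)
        + (4 * Ωsq v / r v)
          * ((1 / 2) * deriv (fun w => (Ωsq w)⁻¹ * deriv (fun s => r s * h s) w) v) := by
  have hrh : deriv (fun s => r s * h s) = fun w => Ωsq w * h w + r w * deriv h w :=
    funext fun w => ((hr w).mul (hh w).hasDerivAt).deriv
  have hω₁ : HasDerivAt (fun w => (Ωsq w)⁻¹ * (Ωsq w * h w + r w * deriv h w)) _ v :=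
    (hΩ.inv hΩ0).mul ((hΩ.mul (hh v).hasDerivAt).add ((hr v).mul hh'.hasDerivAt))
  rw [hrh, hω₁.deriv, deriv_const_mul _ hh']
  simp only [Pi.inv_apply]
  field_simp
  ring

theorem pure_gauge_linearised_raychaudhuri
    (M : ℝ) (hM : 0 < M) (r f : ℝ → ℝ)
    (hr : Differentiable ℝ r) (hr2 : ∀ v, 2 * M < r v)
    (hr' : ∀ v, deriv r v = 1 - 2 * M / r v)
    (hf : ContDiff ℝ 2 f) :
    ∀ v,
      deriv (fun w => 2 * deriv (fun s => f s * (1 - 2 * M / r s) / r s) w) v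
        = -(2 * (1 - 2 * M / r v) / r v)
              * (2 * deriv (fun s => f s * (1 - 2 * M / r s) / r s) v)
          + (2 * M / (r v) ^ 2)
              * (2 * deriv (fun s => f s * (1 - 2 * M / r s) / r s) v)
          + (4 * (1 - 2 * M / r v) / r v)
              * ((1 / 2) * deriv (fun w =>
                  (1 - 2 * M / r w)⁻¹ * deriv (fun s => f s * (1 - 2 * M / r s)) w) v) := by
  intro v
  have hr0 (w : ℝ) : r w ≠ 0 := by linarith [hr2 w]
  have hdr (w : ℝ) : HasDerivAt r (1 - 2 * M / r w) w := hr' w ▸ (hr w).hasDerivAt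
  have hrC : ContDiff ℝ 2 r := contDiff_of_deriv_eq_one_sub_two_mul_div hr hr0 hr' 2
  have hhC : ContDiff ℝ 2 fun s => f s * (1 - 2 * M / r s) / r s :=
    (hf.mul (contDiff_const.sub (contDiff_const.div hrC hr0))).div hrC hr0
  have hgauge : (fun s => f s * (1 - 2 * M / r s))
      = fun s => r s * (f s * (1 - 2 * M / r s) / r s) :=
    funext fun s => (mul_div_cancel₀ _ (hr0 s)).symm
  rw [hgauge, show 2 * M / r v ^ 2 = 2 * (M / r v ^ 2) from mul_div_assoc _ _ _]
  exact raychaudhuri_of_pure_gauge hdr (hasDerivAt_one_sub_two_mul_div (hdr v) (hr0 v))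
    (hhC.differentiable two_ne_zero) (hhC.differentiable_deriv_two v) (hr0 v)
    (one_sub_two_mul_div_pos hM (hr2 v)).ne'
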